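/- arXiv:1610.03808 — 2 statements merged into one kernel-verified Lean document; each statement's English description precedes it below -/
import Mathlib

section
/- The number of primitive pseudo orbits of topological length n ≥ 2 on a q-nary graph of order m is (q−1)·q^{n−1}. -/
/-- A word is Lyndon if it is nonempty and strictly smaller (lexicographically)
than all of its nontrivial rotations. -/
def IsLyndon {α : Type*} [LinearOrder α] (w : List α) : Prop :=
  w ≠ [] ∧ ∀ k : ℕ, 0 < k → k < w.length → w < w.rotate k


open List

variable {α : Type*} [LinearOrder α]

theorem lex_lt_def {u v : List α} : u < v ↔ List.Lex (· < ·) u v := Iff.rfl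

theorem lt_append_right {u t : List α} (ht : t ≠ []) : u < u ++ t := by
  have : List.Lex (· < ·) (u ++ []) (u ++ t) := by
    apply List.Lex.append_left
    cases t with
    | nil => exact absurd rfl ht
    | cons a l => exact List.Lex.nil
  simpa using this

theorem prefix_lt_of_ne {u v : List α} (h : u <+: v) (hne : u ≠ v) : u < v := by
  obtain ⟨t, rfl⟩ := h
  apply lt_append_right
  rintro rfl; simp at hne

theorem prefix_le {u v : List α} (h : u <+: v) : u ≤ v := by
  rcases eq_or_ne u v with rfl | hne
  · exact le_rfl
  · exact le_of_lt (prefix_lt_of_ne h hne)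

theorem append_lt_append_iff {s a b : List α} : s ++ a < s ++ b ↔ a < b := by
  constructor
  · intro h
    induction s with
    | nil => exact h
    | cons x s ih => exact ih (List.lex_cons_iff.mp h)
  · intro h; exact List.Lex.append_left _ h _

theorem lt_prefix_or_append {u v : List α} (h : u < v) :
    u <+: v ∨ ∀ x y : List α, u ++ x < v ++ y := by
  rw [lex_lt_def] at h
  induction h with
  | nil => exact Or.inl (by simp)
  | @cons a l₁ l₂ h ih =>
      rcases ih with h' | h'
      · exact Or.inl ((prefix_cons_inj a).mpr h')
      · exact Or.inr fun x y => List.Lex.cons (h' x y)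
  | @rel a₁ l₁ a₂ l₂ h => exact Or.inr fun x y => List.Lex.rel h

/-- no-prefix strict append monotone -/
theorem lt_append_of_not_prefix {u v : List α} (h : u < v) (hp : ¬ u <+: v)
    (x y : List α) : u ++ x < v ++ y :=
  ((lt_prefix_or_append h).resolve_left hp) x y


/-- A Lyndon word is smaller than each of its proper nonempty suffixes. -/
theorem IsLyndon.lt_drop {w : List α} (hw : IsLyndon w) {k : ℕ} (hk : 0 < k)
    (hk' : k < w.length) : w < w.drop k := by
  set s := w.drop k with hs
  set u := w.take k with hu
  have hw1 : w < s ++ u := by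
    have := hw.2 k hk hk'
    rwa [List.rotate_eq_drop_append_take hk'.le] at this
  rcases lt_trichotomy w s with h | h | h
  · exact h
  · exfalso
    have : s.length < w.length := by
      rw [hs, List.length_drop]; omega
    rw [← h] at this; omega
  · exfalso
    by_cases hp : s <+: w
    · -- s is a prefix of w; write w = s ++ v
      have hsl : s.length = w.length - k := by rw [hs, List.length_drop]
      have hsw : s = w.take (w.length - k) := by
        rw [List.prefix_iff_eq_take.mp hp, hsl]
      set v := w.drop (w.length - k) with hv
      have hwsv : s ++ v = w := by rw [hsw, hv, List.take_append_drop]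
      -- from hw1 : w < s ++ u and w = s ++ v : v < u
      have hvu : v < u := by
        rw [← hwsv] at hw1
        exact append_lt_append_iff.mp hw1
      have hvlen : v.length = k := by rw [hv, List.length_drop]; omega
      have hulen : u.length = k := by rw [hu, List.length_take]; omega
      have hnp : ¬ v <+: u := by
        intro hpre
        exact absurd (hpre.eq_of_length (by omega)) (ne_of_lt hvu)
      -- second rotation at w.length - k
      have h2 : w < v ++ s := by
        have := hw.2 (w.length - k) (by omega) (by omega)
        rwa [List.rotate_eq_drop_append_take (by omega), ← hv, ← hsw] at this
      have h3 : v ++ s < u ++ s := lt_append_of_not_prefix hvu hnp s s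
      have h4 : u ++ s = w := by rw [hu, hs, List.take_append_drop]
      rw [h4] at h3
      exact lt_irrefl w (lt_trans h2 h3)
    · have h3 : s ++ u < w ++ [] := lt_append_of_not_prefix h hp u []
      rw [List.append_nil] at h3
      exact lt_irrefl w (lt_trans hw1 h3)

/-- Conversely, a word smaller than all its proper nonempty suffixes is Lyndon. -/
theorem isLyndon_of_lt_drop {w : List α} (hw : w ≠ [])
    (h : ∀ k, 0 < k → k < w.length → w < w.drop k) : IsLyndon w := by
  refine ⟨hw, fun k hk hk' => ?_⟩
  rw [List.rotate_eq_drop_append_take hk'.le]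
  have h1 : w < w.drop k := h k hk hk'
  have hnp : ¬ w <+: w.drop k := by
    intro hp
    have := hp.length_le
    rw [List.length_drop] at this; omega
  have := lt_append_of_not_prefix h1 hnp [] (w.take k)
  rwa [List.append_nil] at this

theorem IsLyndon.length_pos {w : List α} (hw : IsLyndon w) : 0 < w.length :=
  List.length_pos_iff.mpr hw.1

theorem IsLyndon.append_lt {u v : List α} (hu : IsLyndon u) (hv : IsLyndon v)
    (huv : u < v) : u ++ v < v := by
  by_cases hp : u <+: v
  · obtain ⟨t, rfl⟩ := hp
    have ht : t ≠ [] := by rintro rfl; simp at huv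
    -- goal : u ++ (u ++ t) < u ++ t  ⟺  u ++ t < t
    rw [show u ++ (u ++ t) = u ++ (u ++ t) from rfl]
    rw [append_lt_append_iff]
    -- v = u ++ t, t = v.drop u.length, proper suffix
    have : (u ++ t) < (u ++ t).drop u.length := by
      apply hv.lt_drop hu.length_pos
      simp only [List.length_append]
      have := List.length_pos_iff.mpr ht
      omega
    simpa [List.drop_left] using this
  · have := lt_append_of_not_prefix huv hp v []
    rwa [List.append_nil] at this

/-- Concatenation of two Lyndon words `u < v` is Lyndon. -/
theorem IsLyndon.append {u v : List α} (hu : IsLyndon u) (hv : IsLyndon v)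
    (huv : u < v) : IsLyndon (u ++ v) := by
  apply isLyndon_of_lt_drop (by simp [hu.1])
  intro k hk hk'
  rw [List.length_append] at hk'
  rcases lt_trichotomy k u.length with h | h | h
  · -- drop inside u
    rw [List.drop_append_of_le_length h.le]
    have h1 : u < u.drop k := hu.lt_drop hk h
    have hnp : ¬ u <+: u.drop k := fun hp => by
      have := hp.length_le; rw [List.length_drop] at this; omega
    exact lt_append_of_not_prefix h1 hnp v v
  · subst h
    rw [List.drop_left]
    exact hu.append_lt hv huv
  · -- drop inside v
    have : (u ++ v).drop k = v.drop (k - u.length) := by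
      rw [List.drop_append]
      simp [show u.length - k = 0 by omega, List.drop_eq_nil_of_le (le_of_lt h)]
    rw [this]
    have h1 : v < v.drop (k - u.length) := hv.lt_drop (by omega) (by omega)
    exact lt_trans (hu.append_lt hv huv) h1

/-- Every nonempty prefix of a concatenation of blocks each `≤ b` decomposes as
`x ++ s` with `s` a nonempty word `≤ b`. -/
theorem exists_tail_le (b : List α) :
    ∀ (L : List (List α)) (p : List α), (∀ l ∈ L, l ≤ b ∧ l ≠ []) →
      p <+: L.flatten → p ≠ [] → ∃ x s : List α, p = x ++ s ∧ s ≠ [] ∧ s ≤ b := by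
  intro L
  induction L with
  | nil => intro p _ hp hne; rw [List.flatten_nil, List.prefix_nil] at hp; exact absurd hp hne
  | cons l L ih =>
    intro p hall hp hne
    rw [List.flatten_cons] at hp
    by_cases hlen : p.length ≤ l.length
    · have hpl : p <+: l :=
        List.prefix_of_prefix_length_le hp (List.prefix_append l L.flatten) hlen
      exact ⟨[], p, by simp, hne, le_trans (prefix_le hpl) (hall l (by simp)).1⟩
    · push_neg at hlen
      have hlp : l <+: p :=
        List.prefix_of_prefix_length_le (List.prefix_append l L.flatten) hp hlen.le
      obtain ⟨p', rfl⟩ := hlp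
      have hp' : p' <+: L.flatten := by
        obtain ⟨t, ht⟩ := hp
        rw [List.append_assoc] at ht
        exact ⟨t, List.append_cancel_left ht⟩
      have hp'ne : p' ≠ [] := by
        rintro rfl; rw [List.append_nil] at hlen; omega
      obtain ⟨x, s, hxs, hsne, hsb⟩ := ih p' (fun l' hl' => hall l' (by simp [hl'])) hp' hp'ne
      exact ⟨l ++ x, s, by rw [hxs, List.append_assoc], hsne, hsb⟩

/-- Any Lyndon prefix of a nonincreasing concatenation of Lyndon words is `≤` the head. -/
theorem lyndon_prefix_le_head {l : List α} {L : List (List α)}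
    (hall : ∀ x ∈ l :: L, IsLyndon x) (hchain : (l :: L).Chain' (· ≥ ·))
    {p : List α} (hp : IsLyndon p) (hpre : p <+: (l :: L).flatten) : p ≤ l := by
  have hble : ∀ x ∈ l :: L, x ≤ l ∧ x ≠ [] := by
    intro x hx
    refine ⟨?_, (hall x hx).1⟩
    rcases List.mem_cons.mp hx with rfl | hx'
    · exact le_rfl
    · have hpw : (l :: L).Pairwise (· ≥ ·) := List.isChain_iff_pairwise.mp hchain
      exact (List.pairwise_cons.mp hpw).1 x hx'
  obtain ⟨x, s, hxs, hsne, hsb⟩ := exists_tail_le l (l :: L) p hble hpre hp.1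
  rcases eq_or_ne x [] with rfl | hxne
  · rw [List.nil_append] at hxs; rwa [hxs]
  · have hxlen : 0 < x.length := List.length_pos_iff.mpr hxne
    have hslen : x.length < p.length := by
      rw [hxs, List.length_append]
      have := List.length_pos_iff.mpr hsne
      omega
    have hps : p < s := by
      rw [hxs]
      have := hp.lt_drop hxlen hslen
      rwa [hxs, List.drop_left] at this
    exact le_of_lt (lt_of_lt_of_le hps hsb)

/-- Uniqueness of the Chen–Fox–Lyndon factorization. -/
theorem cfl_unique : ∀ (L M : List (List α)),
    (∀ x ∈ L, IsLyndon x) → L.Chain' (· ≥ ·) →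
    (∀ x ∈ M, IsLyndon x) → M.Chain' (· ≥ ·) →
    L.flatten = M.flatten → L = M := by
  intro L
  induction L with
  | nil =>
    intro M _ _ hM _ hj
    rw [List.flatten_nil] at hj
    cases M with
    | nil => rfl
    | cons m M' =>
      exfalso
      have := (hM m (by simp)).1
      rw [List.flatten_cons] at hj
      rcases List.append_eq_nil_iff.mp hj.symm with ⟨h1, _⟩
      exact this h1
  | cons l L' ih =>
    intro M hL hLc hM hMc hj
    cases M with
    | nil =>
      exfalso
      rw [List.flatten_nil] at hj
      rcases List.append_eq_nil_iff.mp hj with ⟨h1, _⟩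
      exact (hL l (by simp)).1 h1
    | cons m M' =>
      have hlm : l = m := by
        have h1 : l ≤ m := by
          apply lyndon_prefix_le_head hM hMc (hL l (by simp))
          rw [← hj, List.flatten_cons]; exact List.prefix_append _ _
        have h2 : m ≤ l := by
          apply lyndon_prefix_le_head hL hLc (hM m (by simp))
          rw [hj, List.flatten_cons]; exact List.prefix_append _ _
        exact le_antisymm h1 h2
      subst hlm
      have hj' : L'.flatten = M'.flatten := by
        rw [List.flatten_cons, List.flatten_cons] at hj
        exact List.append_cancel_left hj
      have := ih M' (fun x hx => hL x (by simp [hx])) hLc.tail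
        (fun x hx => hM x (by simp [hx])) hMc.tail hj'
      rw [this]

instance isLyndon_decidable [DecidableEq α] : DecidablePred (IsLyndon (α := α)) := fun w =>
  decidable_of_iff (w ≠ [] ∧ ∀ k < w.length, 0 < k → w < w.rotate k)
    (by unfold IsLyndon; tauto)

theorem isLyndon_singleton (a : α) : IsLyndon [a] :=
  ⟨by simp, fun k hk hk' => by simp at hk'; omega⟩

/-- Existence of the CFL factorization, with the extra property that the head
factor dominates every Lyndon prefix. -/
theorem cfl_exists [DecidableEq α] : ∀ (w : List α), ∃ L : List (List α),
    L.flatten = w ∧ (∀ x ∈ L, IsLyndon x) ∧ L.Chain' (· ≥ ·) ∧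
    (∀ p, p <+: w → IsLyndon p → ∃ h L', L = h :: L' ∧ p ≤ h) := by
  suffices H : ∀ (n : ℕ) (w : List α), w.length ≤ n → ∃ L : List (List α),
      L.flatten = w ∧ (∀ x ∈ L, IsLyndon x) ∧ L.Chain' (· ≥ ·) ∧
      (∀ p, p <+: w → IsLyndon p → ∃ h L', L = h :: L' ∧ p ≤ h) by
    intro w; exact H w.length w le_rfl
  intro n
  induction n with
  | zero =>
    intro w hw
    rw [Nat.le_zero, List.length_eq_zero_iff] at hw
    subst hw
    exact ⟨[], rfl, by simp, List.isChain_nil, fun p hp hlp =>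
      absurd (List.prefix_nil.mp hp) hlp.1⟩
  | succ n ih =>
    intro w hw
    rcases eq_or_ne w [] with rfl | hne
    · exact ⟨[], rfl, by simp, List.isChain_nil, fun p hp hlp =>
        absurd (List.prefix_nil.mp hp) hlp.1⟩
    have hwpos : 0 < w.length := List.length_pos_iff.mpr hne
    set P : ℕ → Prop := fun k => 0 < k ∧ IsLyndon (w.take k) with hP
    have hP1 : P 1 := by
      refine ⟨one_pos, ?_⟩
      cases w with
      | nil => exact absurd rfl hne
      | cons a t => simpa using isLyndon_singleton a
    set k := Nat.findGreatest P w.length with hkdef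
    have hk : P k := Nat.findGreatest_spec hwpos hP1
    have hkle : k ≤ w.length := Nat.findGreatest_le _
    have hlen_l : (w.take k).length = k := by rw [List.length_take]; omega
    have hmax : ∀ p, p <+: w → IsLyndon p → p ≤ w.take k := by
      intro p hp hlp
      have hple : p.length ≤ k := by
        by_contra hgt
        push_neg at hgt
        refine Nat.findGreatest_is_greatest hgt hp.length_le ⟨List.length_pos_iff.mpr hlp.1, ?_⟩
        rwa [← List.prefix_iff_eq_take.mp hp]
      exact prefix_le (List.prefix_of_prefix_length_le hp (List.take_prefix k w)
        (by omega))
    have hlw : w.take k ++ w.drop k = w := List.take_append_drop k w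
    obtain ⟨L', hjoin, hLyn, hchain, _⟩ := ih (w.drop k) (by rw [List.length_drop]; omega)
    refine ⟨w.take k :: L', ?_, ?_, ?_, ?_⟩
    · rw [List.flatten_cons, hjoin, hlw]
    · intro x hx
      rcases List.mem_cons.mp hx with rfl | hx'
      · exact hk.2
      · exact hLyn x hx'
    · rw [List.Chain', List.isChain_cons]
      refine ⟨?_, hchain⟩
      intro b hb
      cases L' with
      | nil => simp at hb
      | cons h T =>
        simp only [List.head?_cons, Option.mem_def, Option.some_inj] at hb
        rw [← hb]
        have hbpre : h <+: w.drop k := by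
          rw [← hjoin, List.flatten_cons]; exact List.prefix_append _ _
        have hbl : IsLyndon h := hLyn h (by simp)
        by_contra hlt
        simp only [ge_iff_le, not_le] at hlt
        have hcat : IsLyndon (w.take k ++ h) := hk.2.append hbl hlt
        have hcatpre : w.take k ++ h <+: w := by
          obtain ⟨t, ht⟩ := hbpre
          exact ⟨t, by rw [List.append_assoc, ht, hlw]⟩
        have hgt : k < (w.take k ++ h).length := by
          rw [List.length_append, hlen_l]
          have := hbl.length_pos
          omega
        refine Nat.findGreatest_is_greatest hgt hcatpre.length_le ⟨by omega, ?_⟩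
        rwa [← List.prefix_iff_eq_take.mp hcatpre]
    · exact fun p hp hlp => ⟨w.take k, L', rfl, hmax p hp hlp⟩

/-! ### Counting -/

variable (α) in
/-- Multisets of Lyndon words of total length `n`. -/
def LynM [LinearOrder α] (n : ℕ) : Type _ :=
  {m : Multiset (List α) // (∀ w ∈ m, IsLyndon w) ∧ (m.map List.length).sum = n}

variable (α) in
/-- Pairs of a finite set of Lyndon words and an arbitrary word, with total
weight (counting the word twice) equal to `n`. -/
def LynP [LinearOrder α] (n : ℕ) : Type _ :=
  {p : Finset (List α) × List α //
    (∀ w ∈ p.1, IsLyndon w) ∧ (∑ w ∈ p.1, w.length) + 2 * p.2.length = n}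

variable (α) in
/-- Pairs of a finite set of Lyndon words and a multiset of Lyndon words. -/
def LynU [LinearOrder α] (n : ℕ) : Type _ :=
  {p : Finset (List α) × Multiset (List α) //
    (∀ w ∈ p.1, IsLyndon w) ∧ (∀ w ∈ p.2, IsLyndon w) ∧
      (∑ w ∈ p.1, w.length) + 2 * (p.2.map List.length).sum = n}

section Counting

variable [DecidableEq α]

/-- The CFL bijection: joining the nonincreasing sorted list of a Lyndon multiset. -/
def toWord (m : Multiset (List α)) : List α := (m.sort (· ≥ ·)).flatten

theorem toWord_length (m : Multiset (List α)) :
    (toWord m).length = (m.map List.length).sum := by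
  rw [toWord, List.length_flatten]
  conv_rhs => rw [← Multiset.sort_eq m (· ≥ ·), Multiset.map_coe, Multiset.sum_coe]

theorem toWord_inj {m₁ m₂ : Multiset (List α)} (h₁ : ∀ w ∈ m₁, IsLyndon w)
    (h₂ : ∀ w ∈ m₂, IsLyndon w) (h : toWord m₁ = toWord m₂) : m₁ = m₂ := by
  have hs : m₁.sort (· ≥ ·) = m₂.sort (· ≥ ·) := by
    apply cfl_unique
    · intro x hx; exact h₁ x (by rwa [← Multiset.mem_sort (· ≥ ·)])
    · exact List.isChain_iff_pairwise.mpr (Multiset.pairwise_sort _ _)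
    · intro x hx; exact h₂ x (by rwa [← Multiset.mem_sort (· ≥ ·)])
    · exact List.isChain_iff_pairwise.mpr (Multiset.pairwise_sort _ _)
    · exact h
  rw [← Multiset.sort_eq m₁ (· ≥ ·), ← Multiset.sort_eq m₂ (· ≥ ·), hs]

theorem toWord_surj (w : List α) : ∃ m : Multiset (List α),
    (∀ x ∈ m, IsLyndon x) ∧ toWord m = w := by
  obtain ⟨L, hjoin, hLyn, hchain, -⟩ := cfl_exists w
  refine ⟨↑L, fun x hx => hLyn x (by rwa [← Multiset.mem_coe]), ?_⟩
  have hsort : Multiset.sort (↑L : Multiset (List α)) (· ≥ ·) = L := by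
    refine List.Perm.eq_of_pairwise' (r := (· ≥ ·)) (Multiset.pairwise_sort _ _) ?_
      (Multiset.coe_eq_coe.mp (Multiset.sort_eq (↑L : Multiset (List α)) (· ≥ ·)))
    exact List.isChain_iff_pairwise.mp hchain
  rw [toWord, hsort, hjoin]

/-- The CFL bijection between Lyndon multisets of weight `n` and words. -/
noncomputable def LynMEquiv (n : ℕ) :
    LynM α n ≃ {w : List α // w.length = n} := by
  apply Equiv.ofBijective
    (fun m : LynM α n => (⟨toWord m.1, by rw [toWord_length, m.2.2]⟩ :
      {w : List α // w.length = n}))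
  constructor
  · intro m₁ m₂ h
    exact Subtype.ext (toWord_inj m₁.2.1 m₂.2.1 (congrArg Subtype.val h))
  · rintro ⟨w, hw⟩
    obtain ⟨m, hLyn, hword⟩ := toWord_surj w
    exact ⟨⟨m, hLyn, by rw [← toWord_length, hword, hw]⟩, Subtype.ext hword⟩

/-- indicator count for a Finset's underlying multiset -/
theorem count_finset_val (S : Finset (List α)) (w : List α) :
    S.val.count w = if w ∈ S then 1 else 0 :=
  Multiset.count_eq_of_nodup S.nodup

/-- `LynU → LynM`, `(S, K) ↦ S + K + K`, is a bijection. -/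
noncomputable def LynUEquiv (n : ℕ) : LynU α n ≃ LynM α n := by
  have hmem : ∀ p : LynU α n, ∀ w ∈ p.1.1.val + p.1.2 + p.1.2, IsLyndon w := by
    rintro p w hw'
    simp only [Multiset.mem_add, Multiset.mem_coe] at hw'
    rcases hw' with (h | h) | h
    · exact p.2.1 w h
    · exact p.2.2.1 w h
    · exact p.2.2.1 w h
  have hwt : ∀ p : LynU α n,
      ((p.1.1.val + p.1.2 + p.1.2).map List.length).sum = n := by
    rintro p
    have hw := p.2.2.2
    have h1 : (Multiset.map List.length p.1.1.val).sum = ∑ w ∈ p.1.1, w.length := rfl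
    simp only [Multiset.map_add, Multiset.sum_add]
    omega
  apply Equiv.ofBijective
    (fun p => (⟨p.1.1.val + p.1.2 + p.1.2, hmem p, hwt p⟩ : LynM α n))
  constructor
  · rintro p₁ p₂ h
    have hcnt : ∀ w, p₁.1.1.val.count w + 2 * p₁.1.2.count w
        = p₂.1.1.val.count w + 2 * p₂.1.2.count w := by
      intro w
      have := congrArg (fun m : LynM α n => m.1.count w) h
      simp only [Multiset.count_add] at this
      omega
    have hS : p₁.1.1 = p₂.1.1 := by
      ext w
      have := hcnt w
      rw [count_finset_val, count_finset_val] at this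
      by_cases h1 : w ∈ p₁.1.1 <;> by_cases h2 : w ∈ p₂.1.1 <;>
        simp [h1, h2] at this ⊢ <;> omega
    have hK : p₁.1.2 = p₂.1.2 := by
      ext w
      have := hcnt w
      rw [count_finset_val, count_finset_val, hS] at this
      split_ifs at this <;> omega
    exact Subtype.ext (Prod.ext hS hK)
  · rintro ⟨m, hLyn, hwt'⟩
    set S : Finset (List α) := m.toFinset.filter (fun w => m.count w % 2 = 1) with hSdef
    set K : Multiset (List α) :=
      m.toFinset.val.bind (fun w => Multiset.replicate (m.count w / 2) w) with hKdef
    have hKcount : ∀ w, K.count w = m.count w / 2 := by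
      intro w
      rw [hKdef, Multiset.count_bind]
      by_cases hwm : w ∈ m.toFinset
      · rw [show (Multiset.map (fun b => (Multiset.replicate (m.count b / 2) b).count w)
            m.toFinset.val).sum
            = ∑ b ∈ m.toFinset, (Multiset.replicate (m.count b / 2) b).count w from rfl]
        rw [Finset.sum_eq_single w]
        · simp [Multiset.count_replicate]
        · intro b _ hbw
          rw [Multiset.count_replicate, if_neg hbw]
        · intro habs; exact absurd hwm habs
      · have hw0 : m.count w = 0 := by
          rwa [Multiset.mem_toFinset, ← Multiset.count_pos, Nat.pos_iff_ne_zero,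
            ne_eq, not_not] at hwm
        rw [show (Multiset.map (fun b => (Multiset.replicate (m.count b / 2) b).count w)
            m.toFinset.val).sum
            = ∑ b ∈ m.toFinset, (Multiset.replicate (m.count b / 2) b).count w from rfl]
        rw [hw0]
        apply Finset.sum_eq_zero
        intro b hb
        rw [Multiset.count_replicate]
        split_ifs with hbw
        · subst hbw; simp [hw0]
        · rfl
    have hScount : ∀ w, S.val.count w = m.count w % 2 := by
      intro w
      rw [count_finset_val]
      by_cases hwS : w ∈ S
      · have := (Finset.mem_filter.mp hwS).2
        simp [hwS, this.symm]
      · simp only [hwS, if_false]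
        rw [hSdef] at hwS
        simp only [Finset.mem_filter, Multiset.mem_toFinset] at hwS
        push_neg at hwS
        by_cases hwm : w ∈ m
        · have := hwS hwm
          omega
        · have : m.count w = 0 := by
            rwa [← Multiset.count_pos, Nat.pos_iff_ne_zero, ne_eq, not_not] at hwm
          omega
    have hrecon : S.val + K + K = m := by
      ext w
      simp only [Multiset.count_add, hKcount, hScount]
      omega
    have hSLyn : ∀ w ∈ S, IsLyndon w := by
      intro w hw
      exact hLyn w (Multiset.mem_toFinset.mp (Finset.mem_filter.mp hw).1)
    have hKLyn : ∀ w ∈ K, IsLyndon w := by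
      intro w hw
      rw [hKdef] at hw
      obtain ⟨b, hb, hw'⟩ := Multiset.mem_bind.mp hw
      have hwb : w = b := Multiset.eq_of_mem_replicate hw'
      subst hwb
      exact hLyn _ (Multiset.mem_toFinset.mp hb)
    have hwtS : (∑ w ∈ S, w.length) + 2 * (K.map List.length).sum = n := by
      have h1 : (Multiset.map List.length S.val).sum = ∑ w ∈ S, w.length := rfl
      have := congrArg (fun m : Multiset (List α) => (m.map List.length).sum) hrecon
      simp only [Multiset.map_add, Multiset.sum_add] at this
      rw [hwt'] at this
      omega
    refine ⟨⟨(S, K), hSLyn, hKLyn, hwtS⟩, ?_⟩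
    exact Subtype.ext hrecon

/-- `LynU → LynP`: replacing the multiset component by its word. -/
noncomputable def LynPEquiv (n : ℕ) : LynU α n ≃ LynP α n := by
  apply Equiv.ofBijective (fun p : LynU α n => (⟨(p.1.1, toWord p.1.2), p.2.1, by
    have := p.2.2.2
    show (∑ w ∈ p.1.1, w.length) + 2 * (toWord p.1.2).length = n
    rw [toWord_length]
    omega⟩ : LynP α n))
  constructor
  · rintro p₁ p₂ h
    have h1 : p₁.1.1 = p₂.1.1 := congrArg (fun x : LynP α n => x.1.1) h
    have h2 : toWord p₁.1.2 = toWord p₂.1.2 := congrArg (fun x : LynP α n => x.1.2) h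
    exact Subtype.ext (Prod.ext h1 (toWord_inj p₁.2.2.1 p₂.2.2.1 h2))
  · rintro ⟨⟨S, v⟩, hS, hv⟩
    obtain ⟨m, hLyn, hword⟩ := toWord_surj v
    refine ⟨⟨(S, m), hS, hLyn, ?_⟩, ?_⟩
    · have h3 := toWord_length m
      rw [hword] at h3
      show (∑ w ∈ S, w.length) + 2 * (Multiset.map List.length m).sum = n
      have hv' : (∑ w ∈ S, w.length) + 2 * v.length = n := hv
      omega
    · apply Subtype.ext
      exact Prod.ext rfl hword

/-- Word count: `{w : List (Fin q) // w.length = n}` has `q ^ n` elements. -/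
def wordEquiv (q n : ℕ) : {w : List (Fin q) // w.length = n} ≃ (Fin n → Fin q) where
  toFun w i := w.1.get (Fin.cast w.2.symm i)
  invFun f := ⟨List.ofFn f, List.length_ofFn⟩
  left_inv := by
    rintro ⟨w, rfl⟩
    apply Subtype.ext
    simpa using List.ofFn_get w
  right_inv := by
    intro f
    funext i
    simp

theorem card_words (q n : ℕ) : Nat.card {w : List (Fin q) // w.length = n} = q ^ n := by
  rw [Nat.card_congr (wordEquiv q n)]
  simp [Nat.card_eq_fintype_card]

/-- The composite equivalence between `LynP` and words. -/
noncomputable def LynPWords (n : ℕ) : LynP α n ≃ {w : List α // w.length = n} :=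
  (LynPEquiv n).symm.trans ((LynUEquiv n).trans (LynMEquiv n))

/-- The empty-word fiber of `LynP` is the type of Lyndon-word sets of weight `n`. -/
def emptyFiberEquiv (n : ℕ) : {p : LynP α n // p.1.2 = []} ≃
    {S : Finset (List α) // (∀ w ∈ S, IsLyndon w) ∧ ∑ w ∈ S, w.length = n} where
  toFun p := ⟨p.1.1.1, p.1.2.1, by
    have h := p.1.2.2
    have h2 := p.2
    rw [h2] at h
    simpa using h⟩
  invFun S := ⟨⟨(S.1, []), S.2.1, by simpa using S.2.2⟩, rfl⟩
  left_inv p := by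
    apply Subtype.ext
    apply Subtype.ext
    exact Prod.ext rfl p.2.symm
  right_inv S := rfl

/-- The nonempty-word fiber of `LynP n` is `LynP (n-2) × α`. -/
def nonemptyFiberEquiv (n : ℕ) (hn : 2 ≤ n) :
    {p : LynP α n // ¬ p.1.2 = []} ≃ LynP α (n - 2) × α where
  toFun p := (⟨(p.1.1.1, p.1.1.2.dropLast), p.1.2.1, by
    have h := p.1.2.2
    have hpos : 0 < p.1.1.2.length := List.length_pos_iff.mpr p.2
    show (∑ w ∈ p.1.1.1, w.length) + 2 * p.1.1.2.dropLast.length = n - 2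
    rw [List.length_dropLast]
    omega⟩, p.1.1.2.getLast p.2)
  invFun pa := ⟨⟨(pa.1.1.1, pa.1.1.2 ++ [pa.2]), pa.1.2.1, by
    have h := pa.1.2.2
    show (∑ w ∈ pa.1.1.1, w.length) + 2 * (pa.1.1.2 ++ [pa.2]).length = n
    rw [List.length_append]
    simp only [List.length_cons, List.length_nil]
    omega⟩, by simp⟩
  left_inv p := by
    apply Subtype.ext
    apply Subtype.ext
    exact Prod.ext rfl (List.dropLast_append_getLast p.2)
  right_inv pa := by
    refine Prod.ext (Subtype.ext (Prod.ext rfl ?_)) ?_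
    · exact List.dropLast_concat
    · exact List.getLast_append _

end Counting

/-- The number of primitive pseudo orbits of topological length `n ≥ 2` on a
`q`-nary graph of order `m` is `(q-1)·q^{n-1}`.  Primitive periodic orbits are
in bijection with Lyndon words, so primitive pseudo orbits of topological
length `n` are the finite sets of distinct Lyndon words of total length `n`. -/
theorem primitive_pseudo_orbit_count (q n : ℕ) (hq : 1 ≤ q) (hn : 2 ≤ n) :
    Nat.card {S : Finset (List (Fin q)) //
        (∀ w ∈ S, IsLyndon w) ∧ ∑ w ∈ S, w.length = n} =
      (q - 1) * q ^ (n - 1) := by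
  haveI : Finite {w : List (Fin q) // w.length = n} :=
    Finite.of_equiv _ (wordEquiv q n).symm
  haveI hfin : Finite (LynP (Fin q) n) :=
    Finite.of_equiv _ (LynPWords (α := Fin q) n).symm
  have hcardn : Nat.card (LynP (Fin q) n) = q ^ n := by
    rw [Nat.card_congr (LynPWords (α := Fin q) n), card_words]
  have hcardn2 : Nat.card (LynP (Fin q) (n - 2)) = q ^ (n - 2) := by
    rw [Nat.card_congr (LynPWords (α := Fin q) (n - 2)), card_words]
  have hsplit : Nat.card (LynP (Fin q) n) =
      Nat.card {p : LynP (Fin q) n // p.1.2 = []} +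
      Nat.card {p : LynP (Fin q) n // ¬ p.1.2 = []} := by
    rw [← Nat.card_congr (Equiv.sumCompl (fun p : LynP (Fin q) n => p.1.2 = []))]
    exact Nat.card_sum
  have hA : Nat.card {p : LynP (Fin q) n // p.1.2 = []} =
      Nat.card {S : Finset (List (Fin q)) //
        (∀ w ∈ S, IsLyndon w) ∧ ∑ w ∈ S, w.length = n} :=
    Nat.card_congr (emptyFiberEquiv n)
  have hB : Nat.card {p : LynP (Fin q) n // ¬ p.1.2 = []} = q ^ (n - 2) * q := by
    rw [Nat.card_congr (nonemptyFiberEquiv n hn), Nat.card_prod, hcardn2,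
      Nat.card_eq_fintype_card, Fintype.card_fin]
  have key : q ^ n = Nat.card {S : Finset (List (Fin q)) //
      (∀ w ∈ S, IsLyndon w) ∧ ∑ w ∈ S, w.length = n} + q ^ (n - 2) * q := by
    rw [← hcardn, hsplit, hA, hB]
  have hpow1 : q ^ (n - 2) * q = q ^ (n - 1) := by
    rw [← pow_succ]
    congr 1
    omega
  have hpow2 : (q - 1) * q ^ (n - 1) + q ^ (n - 1) = q ^ n := by
    have : (q - 1) * q ^ (n - 1) + q ^ (n - 1) = ((q - 1) + 1) * q ^ (n - 1) := by ring
    rw [this, Nat.sub_add_cancel hq, ← pow_succ']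
    congr 1
    omega
  rw [hpow1] at key
  exact Nat.add_right_cancel (key.symm.trans hpow2.symm)
end

section
/- The number of finite sets of distinct Lyndon words over a q-letter alphabet whose lengths sum to n is q for n = 1 and (q−1)·q^{n−1} for n ≥ 2. -/
set_option linter.unusedSectionVars false

namespace LyndonAux

variable {α : Type*} [LinearOrder α]

theorem list_lt_iff {x y : List α} : x < y ↔ List.Lex (· < ·) x y := Iff.rfl

theorem prefix_le {x y : List α} (h : x <+: y) : x ≤ y := by
  obtain ⟨t, rfl⟩ := h
  rcases t with _ | ⟨a, t⟩
  · simp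
  · refine le_of_lt ?_
    rw [list_lt_iff]
    induction x with
    | nil => exact List.Lex.nil
    | cons b x ih => exact List.Lex.cons ih

theorem append_lt_append_left {x y : List α} (z : List α) (h : x < y) : z ++ x < z ++ y :=
  List.Lex.append_left _ h z

theorem lt_of_append_lt_append_left {x y z : List α} (h : z ++ x < z ++ y) : x < y := by
  induction z with
  | nil => exact h
  | cons a z ih => exact ih (List.lex_cons_iff.mp h)

/-- mismatch extension: if `x < y` and `x` is not a prefix of `y`, appending anything
preserves strict inequality. -/
theorem lex_append_of_not_prefix :
    ∀ {x y : List α}, x < y → ¬ x <+: y → ∀ (z w : List α), x ++ z < y ++ w := by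
  intro x y h
  rw [list_lt_iff] at h
  induction h with
  | nil => intro hp; exact absurd (List.nil_prefix) hp
  | @cons a l₁ l₂ h ih =>
      intro hp z w
      refine List.Lex.cons (ih (fun hpre => hp ?_) z w)
      obtain ⟨t, rfl⟩ := hpre
      exact ⟨t, rfl⟩
  | @rel a₁ l₁ a₂ l₂ h =>
      intro _ z w
      exact List.Lex.rel h

theorem not_prefix_of_lt_of_length_le {x y : List α} (h : x < y) (hl : y.length ≤ x.length) :
    ¬ x <+: y := by
  intro hp
  have := List.prefix_iff_eq_take.mp hp
  rw [List.take_of_length_le hl] at this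
  exact absurd h (by simp [this, lt_irrefl])

theorem rotate_append (x y : List α) : (x ++ y).rotate x.length = y ++ x := by
  rw [List.rotate_eq_drop_append_take (by simp), List.drop_left, List.take_left]

/-- A Lyndon word is smaller than each of its proper suffixes. -/
theorem lyndon_lt_suffix {w p s : List α} (hw : IsLyndon w) (he : w = p ++ s)
    (hp : p ≠ []) (hs : s ≠ []) : w < s := by
  have hlp : 0 < p.length := List.length_pos_iff.mpr hp
  have hls : 0 < s.length := List.length_pos_iff.mpr hs
  have hlen : w.length = p.length + s.length := by simp [he]
  have hrot1 : w < s ++ p := by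
    have h2 := hw.2 p.length hlp (by omega)
    rwa [show w.rotate p.length = s ++ p from by rw [he, rotate_append]] at h2
  by_contra hcon
  have hsw : s < w := lt_of_le_of_ne (not_lt.mp hcon) (by
    intro h; have := congrArg List.length h; omega)
  by_cases hpre : s <+: w
  · -- border case
    obtain ⟨u, hu⟩ := hpre
    have hune : u ≠ [] := by
      intro h; rw [h, List.append_nil] at hu; rw [hu] at hlen; omega
    have hup : u < p := by
      have : s ++ u < s ++ p := by rw [hu]; exact hrot1
      exact lt_of_append_lt_append_left this
    have hlu : u.length = p.length := by
      have h3 := congrArg List.length hu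
      rw [hlen] at h3; simp at h3; omega
    have hrot2 : w < u ++ s := by
      have h2 := hw.2 s.length hls (by omega)
      rwa [show w.rotate s.length = u ++ s from by rw [← hu, rotate_append]] at h2
    have : u ++ s < p ++ s :=
      lex_append_of_not_prefix hup (not_prefix_of_lt_of_length_le hup (by omega)) s s
    rw [← he] at this
    exact absurd (lt_trans hrot2 this) (lt_irrefl w)
  · have : s ++ p < w ++ [] := lex_append_of_not_prefix hsw hpre p []
    rw [List.append_nil] at this
    exact absurd (lt_trans hrot1 this) (lt_irrefl w)

theorem lyndon_singleton (a : α) : IsLyndon [a] := by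
  refine ⟨by simp, fun k hk hk' => ?_⟩
  simp at hk'
  omega

theorem lyndon_ne_nil {w : List α} (h : IsLyndon w) : w ≠ [] := h.1

end LyndonAux

namespace LyndonAux

variable {α : Type*} [LinearOrder α]

theorem lyndon_append_lt {u v : List α} (hu : IsLyndon u) (hv : IsLyndon v) (huv : u < v) :
    u ++ v < v := by
  by_cases hpre : u <+: v
  · obtain ⟨t, rfl⟩ := hpre
    have ht : t ≠ [] := by rintro rfl; rw [List.append_nil] at huv; exact absurd huv (lt_irrefl _)
    have : u ++ t < t := lyndon_lt_suffix hv rfl hu.1 ht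
    calc u ++ (u ++ t) < u ++ t := append_lt_append_left u this
      _ = u ++ t := rfl
  · have := lex_append_of_not_prefix huv hpre v []
    rwa [List.append_nil] at this

theorem lyndon_append {u v : List α} (hu : IsLyndon u) (hv : IsLyndon v) (huv : u < v) :
    IsLyndon (u ++ v) := by
  have hlt := lyndon_append_lt hu hv huv
  have hlu : 0 < u.length := List.length_pos_iff.mpr hu.1
  have hlv : 0 < v.length := List.length_pos_iff.mpr hv.1
  refine ⟨by simp [hu.1], fun k hk hk' => ?_⟩
  simp only [List.length_append] at hk'
  rcases lt_trichotomy k u.length with h | h | h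
  · -- k splits u
    have h1 : (u ++ v).rotate k = u.drop k ++ (v ++ u.take k) := by
      rw [List.rotate_eq_drop_append_take (by simp; omega)]
      rw [List.drop_append_of_le_length (by omega), List.take_append_of_le_length (by omega)]
      simp
    rw [h1]
    have hb : u < u.drop k :=
      lyndon_lt_suffix hu (by rw [List.take_append_drop k u]) (by
        rw [← List.length_pos_iff]; simpa using (by omega : 0 < min k u.length))
        (by rw [← List.length_pos_iff]; simp; omega)
    have hnp : ¬ u <+: u.drop k :=
      not_prefix_of_lt_of_length_le hb (by simp)
    exact lex_append_of_not_prefix hb hnp v (v ++ u.take k)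
  · subst h
    rw [rotate_append]
    calc u ++ v < v := hlt
      _ ≤ v ++ u := prefix_le ⟨u, rfl⟩
  · -- k splits v
    set j := k - u.length with hj
    have hjv : 0 < j ∧ j < v.length := by omega
    have hk2 : k = u.length + j := by omega
    have h1 : (u ++ v).rotate k = v.drop j ++ (u ++ v.take j) := by
      rw [List.rotate_eq_drop_append_take (by simp; omega), hk2,
        List.drop_append, List.take_append]
      simp [List.drop_of_length_le, List.take_of_length_le]
    rw [h1]
    have hb : v < v.drop j :=
      lyndon_lt_suffix hv (by rw [List.take_append_drop j v]) (by
        rw [← List.length_pos_iff]; simpa using (by omega : 0 < min j v.length))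
        (by rw [← List.length_pos_iff]; simp; omega)
    have huvb : u ++ v < v.drop j := lt_trans hlt hb
    have hnp : ¬ u ++ v <+: v.drop j :=
      not_prefix_of_lt_of_length_le huvb (by simp; omega)
    have := lex_append_of_not_prefix huvb hnp [] (u ++ v.take j)
    rwa [List.append_nil] at this

end LyndonAux

namespace LyndonAux

variable {α : Type*} [LinearOrder α]

/-- A Chen-Fox-Lyndon factorization: all factors Lyndon, weakly decreasing. -/
def IsCFL (L : List (List α)) : Prop :=
  (∀ l ∈ L, IsLyndon l) ∧ L.Chain' (fun a b => b ≤ a)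

def insertCFL : List α → List (List α) → List (List α)
  | l, [] => [l]
  | l, m :: rest => if m ≤ l then l :: m :: rest else insertCFL (l ++ m) rest

theorem insertCFL_spec : ∀ (L : List (List α)) (l : List α), IsLyndon l →
    (∀ m ∈ L, IsLyndon m) → L.Chain' (fun a b => b ≤ a) →
    IsCFL (insertCFL l L) ∧ (insertCFL l L).flatten = l ++ L.flatten := by
  intro L
  induction L with
  | nil =>
      intro l hl _ _
      refine ⟨⟨?_, by exact List.isChain_singleton l⟩, by simp [insertCFL]⟩
      intro x hx
      simp [insertCFL] at hx
      exact hx ▸ hl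
  | cons m rest ih =>
      intro l hl hall hchain
      rw [insertCFL]
      by_cases hml : m ≤ l
      · rw [if_pos hml]
        refine ⟨⟨?_, ?_⟩, by simp⟩
        · intro x hx
          rcases List.mem_cons.mp hx with rfl | h
          · exact hl
          · exact hall x h
        · exact List.IsChain.cons_cons hml hchain
      · rw [if_neg hml]
        have hlm : l < m := lt_of_not_ge hml
        have hm : IsLyndon m := hall m (by simp)
        have hlm' : IsLyndon (l ++ m) := lyndon_append hl hm hlm
        have := ih (l ++ m) hlm' (fun x hx => hall x (by simp [hx])) hchain.tail
        refine ⟨this.1, ?_⟩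
        rw [this.2]
        simp

theorem cfl_exists (w : List α) : ∃ L : List (List α), IsCFL L ∧ L.flatten = w := by
  induction w with
  | nil => exact ⟨[], ⟨by simp, List.isChain_nil⟩, rfl⟩
  | cons a w ih =>
      obtain ⟨L, hL, hjoin⟩ := ih
      obtain ⟨h1, h2⟩ := insertCFL_spec L [a] (lyndon_singleton a) hL.1 hL.2
      exact ⟨insertCFL [a] L, h1, by rw [h2, hjoin]; rfl⟩

/-- Alignment lemma: a suffix `t` of a Lyndon word `l` that is a prefix of the
flatten of a list of Lyndon words each `≤ l` must align with chunk boundaries. -/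
theorem cfl_align {l : List α} (hl : IsLyndon l) :
    ∀ (M : List (List α)) (t : List α), (∀ m ∈ M, IsLyndon m ∧ m ≤ l) →
    ((∃ s, s ++ t = l ∧ s ≠ []) ∨ t = l) → t <+: M.flatten →
    ∃ M1 M2, M = M1 ++ M2 ∧ t = M1.flatten := by
  intro M
  induction M with
  | nil =>
      intro t _ _ hpre
      simp at hpre
      exact ⟨[], [], by simp, by simp [hpre]⟩
  | cons m M ih =>
      intro t hall hsuf hpre
      by_cases ht : t = []
      · exact ⟨[], m :: M, by simp, by simp [ht]⟩
      have hm := hall m (by simp)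
      rcases le_or_gt t.length m.length with hlen | hlen
      · -- t is a prefix of m
        have htm : t <+: m := by
          refine List.prefix_of_prefix_length_le hpre (List.prefix_append m M.flatten) ?_
          simpa using hlen
        have htle : t ≤ m := prefix_le htm
        -- show t = m, else contradiction
        rcases hsuf with ⟨s, hst, hs⟩ | rfl
        · -- t proper suffix: l < t, but t ≤ m ≤ l
          have hlt : l < t := lyndon_lt_suffix hl hst.symm hs ht
          exact absurd (lt_of_lt_of_le hlt (le_trans htle hm.2)) (lt_irrefl l)
        · -- t = l : then m ≤ l = t ≤ m so t = m
          have : t = m := le_antisymm htle hm.2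
          exact ⟨[m], M, rfl, by simp [this]⟩
      · -- m is a proper prefix of t
        have hmt : m <+: t := by
          refine List.prefix_of_prefix_length_le (List.prefix_append m M.flatten) hpre ?_
          omega
        obtain ⟨t', rfl⟩ := hmt
        have hpre' : t' <+: M.flatten := by
          obtain ⟨r, hr⟩ := hpre
          rw [List.flatten_cons, List.append_assoc] at hr
          exact ⟨r, List.append_cancel_left hr⟩
        have hsuf' : (∃ s, s ++ t' = l ∧ s ≠ []) ∨ t' = l := by
          left
          rcases hsuf with ⟨s, hst, _⟩ | rfl
          · exact ⟨s ++ m, by rw [List.append_assoc]; exact hst, by simp [hm.1.1]⟩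
          · exact ⟨m, rfl, hm.1.1⟩
        obtain ⟨M1, M2, hM, ht'⟩ := ih t' (fun x hx => hall x (by simp [hx])) hsuf' hpre'
        exact ⟨m :: M1, M2, by rw [hM]; rfl, by simp [ht']⟩

theorem chain'_le_of_mem {M : List (List α)} {m x : List α}
    (hchain : (m :: M).Chain' (fun a b => b ≤ a)) (hx : x ∈ m :: M) : x ≤ m := by
  have hp : (m :: M).Pairwise (fun a b => b ≤ a) := by
    rw [← List.isChain_iff_pairwise]
    exact hchain
  rcases List.mem_cons.mp hx with rfl | h
  · exact le_rfl
  · exact (List.pairwise_cons.mp hp).1 x h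

/-- heads of two CFL factorizations of the same word agree -/
theorem cfl_head_eq {l m : List α} {L M : List (List α)}
    (hL : IsCFL (l :: L)) (hM : IsCFL (m :: M))
    (hjoin : (l :: L).flatten = (m :: M).flatten) : l = m := by
  -- wlog on lengths
  wlog hlen : m.length ≤ l.length generalizing l m L M
  · exact (this hM hL hjoin.symm (by omega)).symm
  have hl : IsLyndon l := hL.1 l (by simp)
  have hm : IsLyndon m := hM.1 m (by simp)
  have hlpre : l <+: (m :: M).flatten := by
    rw [← hjoin]
    exact List.prefix_append l L.flatten
  have hall : ∀ x ∈ m :: M, IsLyndon x ∧ x ≤ l := by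
    intro x hx
    refine ⟨hM.1 x hx, le_trans (chain'_le_of_mem hM.2 hx) ?_⟩
    -- m ≤ l since m is a prefix of l
    have h2 : l <+: m ++ M.flatten := by
      have h3 : l <+: (l :: L).flatten := by
        simpa using List.prefix_append l L.flatten
      rw [hjoin] at h3
      simpa using h3
    exact prefix_le (List.prefix_of_prefix_length_le (List.prefix_append m M.flatten) h2 hlen)
  obtain ⟨M1, M2, hMeq, hlflat⟩ := cfl_align hl (m :: M) l hall (Or.inr rfl) hlpre
  rcases M1 with _ | ⟨m1, M1'⟩
  · exact absurd hlflat.symm (by simpa using hl.1)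
  have hm1 : m = m1 := by
    rw [List.cons_append] at hMeq
    exact (List.cons.injEq _ _ _ _ ▸ hMeq : _ ∧ _).1
  subst hm1
  rcases M1' with _ | ⟨x, X⟩
  · simpa using hlflat
  exfalso
  set L1 : List (List α) := m :: x :: X with hL1
  have hL1ne : L1 ≠ [] := by simp [hL1]
  set r := L1.getLast hL1ne with hr
  have hrmem : r ∈ L1 := List.getLast_mem hL1ne
  have hrin : r ∈ m :: M := by
    have : m :: M = L1 ++ M2 := by rw [hMeq]
    rw [this]
    exact List.mem_append_left _ hrmem
  have hrl : IsLyndon r := (hall r hrin).1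
  have hrle : r ≤ l := (hall r hrin).2
  have hsplit : L1 = L1.dropLast ++ [r] := (List.dropLast_append_getLast hL1ne).symm
  have hldecomp : l = L1.dropLast.flatten ++ r := by
    rw [hlflat]
    conv_lhs => rw [hsplit]
    simp
  have hDne : L1.dropLast.flatten ≠ [] := by
    have : L1.dropLast = m :: (x :: X).dropLast := by simp [hL1]
    rw [this]
    simp only [List.flatten_cons]
    intro hcon
    have h4 := congrArg List.length hcon
    simp at h4
    exact hm.1 h4.1
  have hlr : l < r := lyndon_lt_suffix hl hldecomp hDne hrl.1
  exact absurd (lt_of_lt_of_le hlr hrle) (lt_irrefl l)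

theorem cfl_unique : ∀ (L M : List (List α)), IsCFL L → IsCFL M →
    L.flatten = M.flatten → L = M := by
  intro L
  induction L with
  | nil =>
      intro M _ hM hjoin
      rcases M with _ | ⟨m, M⟩
      · rfl
      · exfalso
        have hmne : m ≠ [] := (hM.1 m (by simp)).1
        have hlen := congrArg List.length hjoin
        simp only [List.flatten_nil, List.length_nil, List.flatten_cons,
          List.length_append] at hlen
        have : m.length = 0 := by omega
        exact hmne (List.length_eq_zero_iff.mp this)
  | cons l L ih =>
      intro M hL hM hjoin
      rcases M with _ | ⟨m, M⟩
      · exfalso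
        have hne : l ≠ [] := (hL.1 l (by simp)).1
        simp at hjoin
        exact hne hjoin.1
      have hlm : l = m := cfl_head_eq hL hM hjoin
      subst hlm
      have htail : L.flatten = M.flatten := by
        simp only [List.flatten_cons] at hjoin
        exact List.append_cancel_left hjoin
      have : L = M := ih M ⟨fun x hx => hL.1 x (by simp [hx]), hL.2.tail⟩
        ⟨fun x hx => hM.1 x (by simp [hx]), hM.2.tail⟩ htail
      rw [this]

end LyndonAux

namespace LyndonAux

variable {α : Type*} [LinearOrder α]

noncomputable def cflOf (w : List α) : List (List α) :=
  (cfl_exists w).choose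

theorem cflOf_spec (w : List α) : IsCFL (cflOf w) ∧ (cflOf w).flatten = w :=
  (cfl_exists w).choose_spec

/-- multisets of Lyndon words with total length `n` -/
def MT (α : Type*) [LinearOrder α] (n : ℕ) : Type _ :=
  {M : Multiset (List α) // (∀ w ∈ M, IsLyndon w) ∧ (M.map List.length).sum = n}

instance : IsAntisymm (List α) (fun a b => b ≤ a) := ⟨fun _ _ h1 h2 => le_antisymm h2 h1⟩

theorem sorted_eq_of_coe_eq {L1 L2 : List (List α)}
    (h1 : L1.Chain' (fun a b => b ≤ a)) (h2 : L2.Chain' (fun a b => b ≤ a))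
    (h : (L1 : Multiset (List α)) = (L2 : Multiset (List α))) : L1 = L2 := by
  have hp := Multiset.coe_eq_coe.mp h
  exact List.Perm.eq_of_pairwise' (List.isChain_iff_pairwise.mp h1)
    (List.isChain_iff_pairwise.mp h2) hp

noncomputable def wordsEquivMT (n : ℕ) : {w : List α // w.length = n} ≃ MT α n := by
  refine Equiv.ofBijective (fun w => ⟨((cflOf w.1 : List (List α)) : Multiset (List α)), ?_, ?_⟩)
    ⟨?_, ?_⟩
  · intro x hx
    exact (cflOf_spec w.1).1.1 x (by exact_mod_cast hx)
  · have h5 := (cflOf_spec w.1).2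
    have key : ((↑(cflOf w.1) : Multiset (List α)).map List.length).sum
        = (List.map List.length (cflOf w.1)).sum := by
      simp
    rw [key, ← List.length_flatten, h5, w.2]
  · intro w1 w2 h
    have hco : ((cflOf w1.1 : List (List α)) : Multiset (List α)) = ↑(cflOf w2.1) :=
      congrArg Subtype.val h
    have : cflOf w1.1 = cflOf w2.1 :=
      sorted_eq_of_coe_eq (cflOf_spec w1.1).1.2 (cflOf_spec w2.1).1.2 hco
    have := congrArg List.flatten this
    rw [(cflOf_spec w1.1).2, (cflOf_spec w2.1).2] at this
    exact Subtype.ext this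
  · rintro ⟨M, hM1, hM2⟩
    classical
    set L0 : List (List α) := (Multiset.sort M (· ≤ ·)).reverse with hL0
    have hML0 : (L0 : Multiset (List α)) = M := by
      rw [hL0, Multiset.coe_reverse, Multiset.sort_eq]
    have hchain : L0.Chain' (fun a b => b ≤ a) := by
      apply List.Pairwise.isChain
      rw [hL0, List.pairwise_reverse]
      exact Multiset.pairwise_sort (s := M) (r := (· ≤ ·))
    have hlen : L0.flatten.length = n := by
      rw [List.length_flatten]
      have h6 : ((L0 : Multiset (List α)).map List.length).sum = n := by rw [hML0]; exact hM2
      simpa using h6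
    refine ⟨⟨L0.flatten, hlen⟩, ?_⟩
    have hcfl : IsCFL L0 := ⟨fun x hx => hM1 x (by rw [← hML0]; exact_mod_cast hx), hchain⟩
    have : cflOf L0.flatten = L0 :=
      cfl_unique _ _ (cflOf_spec L0.flatten).1 hcfl (cflOf_spec L0.flatten).2
    refine Subtype.ext ?_
    show ((cflOf L0.flatten : List (List α)) : Multiset (List α)) = M
    rw [this, hML0]

end LyndonAux

namespace LyndonAux

variable {α : Type*} [LinearOrder α]

/-- finite sets of distinct Lyndon words with total length `n` -/
def ST (α : Type*) [LinearOrder α] (n : ℕ) : Type _ :=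
  {S : Finset (List α) // (∀ w ∈ S, IsLyndon w) ∧ ∑ w ∈ S, w.length = n}

theorem finset_sum_eq (S : Finset (List α)) :
    ∑ w ∈ S, w.length = (S.val.map List.length).sum := rfl

section Parity

variable [DecidableEq α]

noncomputable def halfM (M : Multiset (List α)) : Multiset (List α) :=
  ((Multiset.toFinsupp M).mapRange (· / 2) (by norm_num)).toMultiset

theorem count_halfM (M : Multiset (List α)) (x : List α) :
    (halfM M).count x = M.count x / 2 := by
  simp [halfM, Finsupp.count_toMultiset, Finsupp.mapRange_apply, Multiset.toFinsupp_apply]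

noncomputable def oddP (M : Multiset (List α)) : Finset (List α) :=
  M.toFinset.filter (fun x => M.count x % 2 = 1)

theorem count_finset_val (S : Finset (List α)) (x : List α) :
    S.val.count x = if x ∈ S then 1 else 0 := by
  by_cases h : x ∈ S
  · rw [if_pos h]; exact Multiset.count_eq_one_of_mem S.nodup h
  · rw [if_neg h]; exact Multiset.count_eq_zero_of_notMem h

theorem decompM (M : Multiset (List α)) : M = (oddP M).val + 2 • halfM M := by
  rw [Multiset.ext]
  intro x
  rw [Multiset.count_add, Multiset.count_nsmul, count_halfM, count_finset_val]
  by_cases h : x ∈ M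
  · have hmem : x ∈ oddP M ↔ M.count x % 2 = 1 := by
      rw [oddP, Finset.mem_filter, Multiset.mem_toFinset]
      exact ⟨fun h' => h'.2, fun h' => ⟨h, h'⟩⟩
    by_cases hodd : M.count x % 2 = 1
    · rw [if_pos (hmem.mpr hodd)]; omega
    · rw [if_neg (fun hc => hodd (hmem.mp hc))]; omega
  · have h0 : M.count x = 0 := Multiset.count_eq_zero_of_notMem h
    have : x ∉ oddP M := fun hc => by
      have := (Finset.mem_filter.mp hc).2; omega
    rw [if_neg this]; omega

end Parity

theorem sum_lengths_add (A B : Multiset (List α)) :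
    ((A + B).map List.length).sum = (A.map List.length).sum + (B.map List.length).sum := by
  rw [Multiset.map_add, Multiset.sum_add]

theorem sum_lengths_nsmul (k : ℕ) (B : Multiset (List α)) :
    ((k • B).map List.length).sum = k * (B.map List.length).sum := by
  rw [Multiset.map_nsmul, Multiset.sum_nsmul, smul_eq_mul]

/-- the sigma type for the recurrence -/
def SG (α : Type*) [LinearOrder α] (n : ℕ) : Type _ :=
  Σ j : Fin (n / 2 + 1), ST α (n - 2 * (j : ℕ)) × MT α (j : ℕ)

def gmap (n : ℕ) : SG α n → MT α n := fun x =>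
  ⟨x.2.1.1.val + 2 • x.2.2.1, by
    intro w hw
    rcases Multiset.mem_add.mp hw with h | h
    · exact x.2.1.2.1 w h
    · exact x.2.2.2.1 w (Multiset.mem_nsmul.mp h).2, by
    rw [sum_lengths_add, sum_lengths_nsmul, ← finset_sum_eq, x.2.1.2.2, x.2.2.2.2]
    have := x.1.2
    omega⟩

theorem gmap_bijective (n : ℕ) : Function.Bijective (gmap (α := α) n) := by
  classical
  constructor
  · rintro ⟨⟨j, hj⟩, ⟨S, hS1, hS2⟩, ⟨M, hM1, hM2⟩⟩ ⟨⟨k, hk⟩, ⟨S', hS'1, hS'2⟩, ⟨M', hM'1, hM'2⟩⟩ h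
    have hval : S.val + 2 • M = S'.val + 2 • M' := congrArg Subtype.val h
    have hcount : ∀ x : List α,
        S.val.count x + 2 * M.count x = S'.val.count x + 2 * M'.count x := by
      intro x
      have := congrArg (Multiset.count x) hval
      simpa [Multiset.count_add, Multiset.count_nsmul] using this
    have hSS : S = S' := by
      ext x
      have hc := hcount x
      rw [count_finset_val, count_finset_val] at hc
      constructor
      · intro hx
        rw [if_pos hx] at hc
        by_contra hx'
        rw [if_neg hx'] at hc
        omega
      · intro hx
        rw [if_pos hx] at hc
        by_contra hx'
        rw [if_neg hx'] at hc
        omega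
    have hMM : M = M' := by
      rw [Multiset.ext]
      intro x
      have hc := hcount x
      rw [count_finset_val, count_finset_val, hSS] at hc
      by_cases hx : x ∈ S' <;> simp [hx] at hc <;> omega
    have hjk : j = k := by
      simp only [Fin.val_mk] at hM2 hM'2
      rw [← hM2, ← hM'2, hMM]
    subst hjk
    subst hSS
    subst hMM
    rfl
  · rintro ⟨M, hM1, hM2⟩
    set S := oddP M with hSdef
    set H := halfM M with hHdef
    set j := (H.map List.length).sum with hjdef
    have hdec := decompM M
    have hsum : (S.val.map List.length).sum + 2 * j = n := by
      rw [← hM2]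
      conv_rhs => rw [hdec]
      rw [sum_lengths_add, sum_lengths_nsmul]
    have hj : j < n / 2 + 1 := by omega
    have hSly : ∀ w ∈ S, IsLyndon w := by
      intro w hw
      exact hM1 w (Multiset.mem_toFinset.mp (Finset.mem_filter.mp hw).1)
    have hHly : ∀ w ∈ H, IsLyndon w := by
      intro w hw
      have : 0 < H.count w := Multiset.count_pos.mpr hw
      rw [count_halfM] at this
      exact hM1 w (Multiset.count_pos.mp (by omega))
    refine ⟨⟨⟨j, hj⟩, ⟨S, hSly, ?_⟩, ⟨H, hHly, rfl⟩⟩, ?_⟩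
    · show ∑ w ∈ S, w.length = n - 2 * j
      rw [finset_sum_eq]
      omega
    · exact Subtype.ext hdec.symm

end LyndonAux

namespace LyndonAux

variable {α : Type*} [LinearOrder α]

def STtoMT (n : ℕ) : ST α n → MT α n := fun S =>
  ⟨S.1.val, fun w hw => S.2.1 w hw, by rw [← finset_sum_eq]; exact S.2.2⟩

theorem STtoMT_injective (n : ℕ) : Function.Injective (STtoMT (α := α) n) := by
  intro a b h
  exact Subtype.ext (Finset.val_injective (congrArg Subtype.val h))

variable {q : ℕ}

def wordsEquivVector (q n : ℕ) :
    {w : List (Fin q) // w.length = n} ≃ List.Vector (Fin q) n :=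
  ⟨fun x => ⟨x.1, x.2⟩, fun v => ⟨v.1, v.2⟩, fun _ => rfl, fun _ => rfl⟩

theorem card_words (q n : ℕ) : Nat.card {w : List (Fin q) // w.length = n} = q ^ n := by
  rw [Nat.card_congr (wordsEquivVector q n), Nat.card_eq_fintype_card, card_vector,
    Fintype.card_fin]

instance (q n : ℕ) : Finite {w : List (Fin q) // w.length = n} :=
  Finite.of_equiv _ (wordsEquivVector q n).symm

instance (q n : ℕ) : Finite (MT (Fin q) n) :=
  Finite.of_equiv _ (wordsEquivMT n)

instance (q n : ℕ) : Finite (ST (Fin q) n) :=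
  Finite.of_injective _ (STtoMT_injective (α := Fin q) n)

theorem card_MT (q n : ℕ) : Nat.card (MT (Fin q) n) = q ^ n := by
  rw [← Nat.card_congr (wordsEquivMT (α := Fin q) n), card_words]

theorem natcard_sigma {ι : Type*} [Fintype ι] (β : ι → Type*) [∀ i, Finite (β i)] :
    Nat.card (Σ i, β i) = ∑ i, Nat.card (β i) := by
  letI : ∀ i, Fintype (β i) := fun i => Fintype.ofFinite _
  rw [Nat.card_eq_fintype_card, Fintype.card_sigma]
  simp [Nat.card_eq_fintype_card]

theorem recurrence (q n : ℕ) :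
    (q : ℕ) ^ n = ∑ j ∈ Finset.range (n / 2 + 1),
      Nat.card (ST (Fin q) (n - 2 * j)) * q ^ j := by
  rw [← card_MT q n]
  rw [Nat.card_congr (Equiv.ofBijective (gmap (α := Fin q) n) (gmap_bijective n)).symm]
  have h1 : Nat.card (SG (Fin q) n)
      = ∑ j : Fin (n / 2 + 1), Nat.card (ST (Fin q) (n - 2 * (j : ℕ)) × MT (Fin q) (j : ℕ)) :=
    natcard_sigma _
  rw [h1]
  rw [Fin.sum_univ_eq_sum_range (fun j => Nat.card (ST (Fin q) (n - 2 * j) × MT (Fin q) j))]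
  refine Finset.sum_congr rfl fun j _ => ?_
  rw [Nat.card_prod, card_MT]

/-- the claimed closed form -/
def F (q n : ℕ) : ℕ := if n = 0 then 1 else if n = 1 then q else (q - 1) * q ^ (n - 1)

theorem F_add (q : ℕ) (hq : 1 ≤ q) (n : ℕ) (hn : 2 ≤ n) : F q n + q ^ (n - 1) = q ^ n := by
  have h1 : F q n = (q - 1) * q ^ (n - 1) := by
    rw [F, if_neg (by omega), if_neg (by omega)]
  rw [h1, Nat.sub_one_mul]
  have h2 : q ^ (n - 1) ≤ q * q ^ (n - 1) := Nat.le_mul_of_pos_left _ (by omega)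
  rw [Nat.sub_add_cancel h2]
  rw [← pow_succ']
  congr 1
  omega

theorem arith (q : ℕ) (hq : 1 ≤ q) :
    ∀ n, 1 ≤ n → ∑ j ∈ Finset.range (n / 2 + 1), F q (n - 2 * j) * q ^ j = q ^ n := by
  intro n
  induction n using Nat.strong_induction_on with
  | _ n ih =>
    intro hn
    rcases Nat.lt_or_ge n 3 with h3 | h3
    · interval_cases n
      · simp [F]
      · show ∑ j ∈ Finset.range 2, F q (2 - 2 * j) * q ^ j = q ^ 2
        rw [Finset.sum_range_succ, Finset.sum_range_one]
        show F q 2 * q ^ 0 + F q 0 * q ^ 1 = q ^ 2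
        simp only [F, if_neg, if_pos, pow_zero, pow_one]
        norm_num
        rw [Nat.sub_one_mul]
        have h2 : q ≤ q * q := Nat.le_mul_of_pos_left _ (by omega)
        rw [Nat.sub_add_cancel h2, pow_two]
    · set m := n - 2 with hm
      have hmn : n = m + 2 := by omega
      have hdiv : n / 2 + 1 = (m / 2 + 1) + 1 := by omega
      rw [hdiv, Finset.sum_range_succ']
      have htail : ∑ i ∈ Finset.range (m / 2 + 1), F q (n - 2 * (i + 1)) * q ^ (i + 1)
          = q * ∑ i ∈ Finset.range (m / 2 + 1), F q (m - 2 * i) * q ^ i := by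
        rw [Finset.mul_sum]
        refine Finset.sum_congr rfl fun i _ => ?_
        have : n - 2 * (i + 1) = m - 2 * i := by omega
        rw [this, pow_succ]
        ring
      rw [htail, ih m (by omega) (by omega)]
      have : n - 2 * 0 = n := by omega
      rw [this, pow_zero, mul_one]
      have hq2 : q * q ^ m = q ^ (n - 1) := by
        rw [← pow_succ']
        congr 1
        omega
      rw [hq2]
      have := F_add q hq n (by omega)
      omega

theorem card_ST_zero (q : ℕ) : Nat.card (ST (Fin q) 0) = 1 := by
  haveI : Unique (ST (Fin q) 0) := by
    refine ⟨⟨⟨∅, by simp, by simp⟩⟩, ?_⟩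
    rintro ⟨S, hS1, hS2⟩
    refine Subtype.ext ?_
    show S = ∅
    rw [Finset.eq_empty_iff_forall_notMem]
    intro w hw
    have h0 : w.length = 0 := by
      by_contra h
      have : 0 < ∑ x ∈ S, x.length :=
        Finset.sum_pos' (fun i _ => Nat.zero_le _) ⟨w, hw, by omega⟩
      omega
    exact (hS1 w hw).1 (List.length_eq_zero_iff.mp h0)
  exact Nat.card_unique

theorem card_ST (q : ℕ) (hq : 1 ≤ q) : ∀ n, Nat.card (ST (Fin q) n) = F q n := by
  intro n
  induction n using Nat.strong_induction_on with
  | _ n ih =>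
    rcases Nat.eq_zero_or_pos n with rfl | hn
    · rw [card_ST_zero, F, if_pos rfl]
    have h1 := recurrence q n
    have h2 := arith q hq n hn
    rw [Finset.sum_range_succ'] at h1 h2
    simp only [Nat.mul_zero, Nat.sub_zero, pow_zero, mul_one] at h1 h2
    have htails : ∑ i ∈ Finset.range (n / 2), Nat.card (ST (Fin q) (n - 2 * (i + 1))) * q ^ (i + 1)
        = ∑ i ∈ Finset.range (n / 2), F q (n - 2 * (i + 1)) * q ^ (i + 1) := by
      refine Finset.sum_congr rfl fun i _ => ?_
      rw [ih (n - 2 * (i + 1)) (by omega)]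
    omega
end LyndonAux


/-- The number of finite sets of distinct Lyndon words over a `q`-letter
alphabet whose lengths sum to `n` is `q` for `n = 1` and `(q-1)·q^{n-1}` for
`n ≥ 2`. -/
theorem lyndon_set_count (q : ℕ) (hq : 1 ≤ q) :
    (Nat.card {S : Finset (List (Fin q)) //
        (∀ w ∈ S, IsLyndon w) ∧ ∑ w ∈ S, w.length = 1} = q) ∧
      ∀ n : ℕ, 2 ≤ n →
        Nat.card {S : Finset (List (Fin q)) //
            (∀ w ∈ S, IsLyndon w) ∧ ∑ w ∈ S, w.length = n} =
          (q - 1) * q ^ (n - 1) := by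
  constructor
  · have := LyndonAux.card_ST q hq 1
    rw [LyndonAux.F, if_neg (by omega), if_pos rfl] at this
    exact this
  · intro n hn
    have := LyndonAux.card_ST q hq n
    rw [LyndonAux.F, if_neg (by omega), if_neg (by omega)] at this
    exact this
end
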